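/- Let G be a finite group and P a p-subgroup of G. Then N_G(P) is of characteristic p if and only if C_G(P) is of characteristic p. -/

import Mathlib

variable (p : ℕ) (G : Type*) [Group G]

/-- `O_p(G)`: the join of all normal `p`-subgroups of `G` (the largest normal `p`-subgroup
when `G` is finite). -/
def pCore : Subgroup G :=
  ⨆ H : {H : Subgroup G // H.Normal ∧ IsPGroup p H}, H.1

/-- `O_{p'}(G)`: the join of all normal subgroups of order coprime to `p` (the largest normal
`p'`-subgroup when `G` is finite). -/
def pPrimeCore : Subgroup G :=
  ⨆ H : {H : Subgroup G // H.Normal ∧ Nat.Coprime (Nat.card H) p}, H.1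

lemma iSup_normal {G : Type*} [Group G] {ι : Sort*} (H : ι → Subgroup G)
    (h : ∀ i, (H i).Normal) : (⨆ i, H i).Normal := by
  constructor
  intro n hn g
  refine Subgroup.iSup_induction (C := fun x => g * x * g⁻¹ ∈ ⨆ i, H i) H hn
    (fun i x hx => ?_) ?_ (fun x y hx hy => ?_)
  · exact Subgroup.mem_iSup_of_mem i ((h i).conj_mem x hx g)
  · simpa using Subgroup.one_mem (⨆ i, H i)
  · have e : g * (x * y) * g⁻¹ = (g * x * g⁻¹) * (g * y * g⁻¹) := by group
    show g * (x * y) * g⁻¹ ∈ ⨆ i, H i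
    rw [e]; exact mul_mem hx hy

instance pCore_normal : (pCore p G).Normal := iSup_normal _ (fun i => i.2.1)

instance pPrimeCore_normal : (pPrimeCore p G).Normal := iSup_normal _ (fun i => i.2.1)

/-- A group `G` is of characteristic `p` if `C_G(O_p(G)) ≤ O_p(G)`. -/
def IsCharP : Prop :=
  Subgroup.centralizer ((pCore p G : Subgroup G) : Set G) ≤ pCore p G

/-- A group `G` is almost of characteristic `p` if `G/O_{p'}(G)` is of characteristic `p`. -/
def IsAlmostCharP : Prop := IsCharP p (G ⧸ pPrimeCore p G)

/-!
`C_G(P)` is normal in `N_G(P)`, and a normal subgroup `K` of a group `H` of characteristic `p`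
is again of characteristic `p`: if `u` is a `p'`-element of `C_K(O_p(K))` and `q ∈ O_p(H)`, then
`⁅q, u⁆` lies in `O_p(H) ∩ K ≤ O_p(K)`, so it commutes with `u`, and coprimality forces
`⁅q, u⁆ = 1`; thus `u ∈ C_H(O_p(H)) ≤ O_p(H)` is trivial and `C_K(O_p(K))` is a normal
`p`-subgroup of `K`.

Conversely `O_p(C_G(P))` and `P` both lie in `O_p(N_G(P))`, so
`C_{N_G(P)}(O_p(N_G(P))) ≤ C_{C_G(P)}(O_p(C_G(P))) ≤ O_p(C_G(P)) ≤ O_p(N_G(P))`.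
-/

open Subgroup
open scoped commutatorElement

section OrderOf

variable {G : Type*} [Group G]

theorem eq_one_of_pow_eq_one_of_coprime {g : G} {m n : ℕ} (hm : g ^ m = 1) (hn : g ^ n = 1)
    (hmn : m.Coprime n) : g = 1 :=
  orderOf_eq_one_iff.mp <|
    Nat.eq_one_of_dvd_coprimes hmn (orderOf_dvd_of_pow_eq_one hm) (orderOf_dvd_of_pow_eq_one hn)

theorem commute_of_commute_commutatorElement {g h : G} {m : ℕ} (hcomm : Commute ⁅g, h⁆ h)
    (hpow : ⁅g, h⁆ ^ m = 1) (hcop : (orderOf h).Coprime m) : Commute g h := by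
  have hconj : g * h * g⁻¹ = ⁅g, h⁆ * h := by rw [commutatorElement_def]; group
  have hord : ⁅g, h⁆ ^ orderOf h = 1 :=
    calc ⁅g, h⁆ ^ orderOf h = (⁅g, h⁆ * h) ^ orderOf h := by
          rw [hcomm.mul_pow, pow_orderOf_eq_one, mul_one]
      _ = g * h ^ orderOf h * g⁻¹ := by rw [← hconj, conj_pow]
      _ = 1 := by rw [pow_orderOf_eq_one, mul_one, mul_inv_cancel]
  exact commutatorElement_eq_one_iff_commute.mp (eq_one_of_pow_eq_one_of_coprime hord hpow hcop)

theorem isPGroup_of_forall_coprime_orderOf {p : ℕ} [Fact p.Prime] [Finite G]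
    (h : ∀ g : G, (orderOf g).Coprime p → g = 1) : IsPGroup p G := by
  intro g
  refine ⟨(orderOf g).factorization p, h _ ?_⟩
  rw [orderOf_pow' g (pow_ne_zero _ (Fact.out : p.Prime).ne_zero),
    Nat.gcd_eq_right (Nat.ordProj_dvd _ p)]
  exact (Nat.coprime_ordCompl Fact.out (orderOf_pos g).ne').symm

end OrderOf

theorem normalizer_le_normalizer_centralizer {G : Type*} [Group G] (s : Set G) :
    normalizer s ≤ normalizer (centralizer s : Set G) :=
  le_normalizer_of_normal_subgroupOf (centralizer_le_normalizer s)

section PCore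

variable {p : ℕ} {G : Type*} [Group G]

theorem le_pCore {H : Subgroup G} [hN : H.Normal] (hH : IsPGroup p H) : H ≤ pCore p G :=
  le_iSup (fun K : {K : Subgroup G // K.Normal ∧ IsPGroup p K} => K.1) ⟨H, hN, hH⟩

theorem isPGroup_pCore [Fact p.Prime] [Finite G] : IsPGroup p (pCore p G) := by
  obtain ⟨S⟩ : Nonempty (Sylow p G) := inferInstance
  exact S.isPGroup'.to_le <| iSup_le fun K => haveI := K.2.1; K.2.2.le_sylow_of_normal S

variable (p) in
/-- `O_p(H)` of a subgroup `H`, as a subgroup of the ambient group. -/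
def pCoreIn (H : Subgroup G) : Subgroup G :=
  (pCore p H).map H.subtype

theorem pCoreIn_le (H : Subgroup G) : pCoreIn p H ≤ H :=
  map_subtype_le _

theorem isPGroup_pCoreIn [Fact p.Prime] [Finite G] (H : Subgroup G) :
    IsPGroup p (pCoreIn p H) :=
  isPGroup_pCore.map _

theorem le_normalizer_pCoreIn (H : Subgroup G) : H ≤ normalizer (pCoreIn p H : Set G) :=
  calc H = (normalizer (pCore p H : Set H)).map H.subtype := by
        rw [normalizer_eq_top, ← MonoidHom.range_eq_map, range_subtype]
    _ ≤ normalizer (pCoreIn p H : Set G) := le_normalizer_map _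

theorem le_pCoreIn {H K : Subgroup G} (hKH : K ≤ H) (hK : IsPGroup p K)
    (hHK : H ≤ normalizer (K : Set G)) : K ≤ pCoreIn p H := by
  have := (normal_subgroupOf_iff_le_normalizer hKH).mpr hHK
  rw [← map_subgroupOf_eq_of_le hKH]
  exact map_mono (le_pCore (hK.comap_of_injective _ H.subtype_injective))

theorem map_subtype_centralizer {H : Subgroup G} (S : Subgroup H) :
    (centralizer (S : Set H)).map H.subtype = H ⊓ centralizer (S.map H.subtype : Set G) := by
  ext x
  constructor
  · rintro ⟨y, hy, rfl⟩
    refine ⟨y.2, mem_centralizer_iff.mpr ?_⟩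
    rintro _ ⟨z, hz, rfl⟩
    exact congrArg Subtype.val (mem_centralizer_iff.mp hy z hz)
  · rintro ⟨hxH, hx⟩
    refine ⟨⟨x, hxH⟩, mem_centralizer_iff.mpr fun z hz => Subtype.ext ?_, rfl⟩
    exact mem_centralizer_iff.mp hx z (mem_map_of_mem _ hz)

theorem isCharP_iff_inf_centralizer_le (H : Subgroup G) :
    IsCharP p H ↔ H ⊓ centralizer (pCoreIn p H : Set G) ≤ pCoreIn p H := by
  rw [IsCharP, ← map_le_map_iff_of_injective H.subtype_injective, map_subtype_centralizer]
  rfl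

variable [Fact p.Prime] [Finite G]

theorem map_pCoreIn_le {G' : Type*} [Group G'] (f : G →* G') (K : Subgroup G) :
    (pCoreIn p K).map f ≤ pCoreIn p (K.map f) :=
  le_pCoreIn (map_mono (pCoreIn_le K)) ((isPGroup_pCoreIn K).map f)
    ((map_mono (le_normalizer_pCoreIn K)).trans (le_normalizer_map f))

theorem le_normalizer_pCoreIn_of_le_normalizer {H K : Subgroup G}
    (hHK : H ≤ normalizer (K : Set G)) : H ≤ normalizer (pCoreIn p K : Set G) := by
  intro g hg
  refine mem_normalizer_fintype fun x hx => ?_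
  have hK : K.map (MulAut.conj g).toMonoidHom = K := mem_normalizer_iff_map_conj_eq.mp (hHK hg)
  have hconj := map_pCoreIn_le (MulAut.conj g).toMonoidHom K (mem_map_of_mem _ hx)
  rw [hK] at hconj
  exact hconj

theorem pCoreIn_inf_le {H K : Subgroup G} (hKH : K ≤ H) :
    pCoreIn p H ⊓ K ≤ pCoreIn p K :=
  le_pCoreIn inf_le_right ((isPGroup_pCoreIn H).to_le inf_le_left)
    ((le_inf (hKH.trans (le_normalizer_pCoreIn H)) le_normalizer).trans
      inf_normalizer_le_normalizer_inf)

theorem pCoreIn_le_pCoreIn {H K : Subgroup G} (hKH : K ≤ H) (hHK : H ≤ normalizer (K : Set G)) :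
    pCoreIn p K ≤ pCoreIn p H :=
  le_pCoreIn ((pCoreIn_le K).trans hKH) (isPGroup_pCoreIn K)
    (le_normalizer_pCoreIn_of_le_normalizer hHK)

theorem le_normalizer_inf_centralizer_pCoreIn {H K : Subgroup G}
    (hHK : H ≤ normalizer (K : Set G)) :
    H ≤ normalizer ((K ⊓ centralizer (pCoreIn p K : Set G) : Subgroup G) : Set G) :=
  (le_inf hHK ((le_normalizer_pCoreIn_of_le_normalizer hHK).trans
    (normalizer_le_normalizer_centralizer _))).trans inf_normalizer_le_normalizer_inf

theorem mem_centralizer_pCoreIn_of_coprime {H K : Subgroup G} (hKH : K ≤ H)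
    (hHK : H ≤ normalizer (K : Set G)) {u : G} (hu : u ∈ K ⊓ centralizer (pCoreIn p K : Set G))
    (hcop : (orderOf u).Coprime p) : u ∈ centralizer (pCoreIn p H : Set G) := by
  refine mem_centralizer_iff.mpr fun q hq => ?_
  have hcommH : ⁅q, u⁆ ∈ pCoreIn p H := by
    rw [show ⁅q, u⁆ = q * (u * q⁻¹ * u⁻¹) by rw [commutatorElement_def]; group]
    exact mul_mem hq ((le_normalizer_pCoreIn H (hKH hu.1) q⁻¹).mp (inv_mem hq))
  have hcommZ : ⁅q, u⁆ ∈ K ⊓ centralizer (pCoreIn p K : Set G) := by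
    rw [commutatorElement_def]
    exact mul_mem ((le_normalizer_inf_centralizer_pCoreIn hHK (pCoreIn_le H hq) u).mp hu)
      (inv_mem hu)
  have hcommK : ⁅q, u⁆ ∈ pCoreIn p K := pCoreIn_inf_le hKH ⟨hcommH, hcommZ.1⟩
  obtain ⟨j, hj⟩ := isPGroup_pCoreIn K ⟨_, hcommK⟩
  refine (commute_of_commute_commutatorElement (mem_centralizer_iff.mp hu.2 _ hcommK) ?_
    (hcop.pow_right j)).eq
  simpa using congrArg Subtype.val hj

theorem IsCharP.of_le_of_le_normalizer {H K : Subgroup G} (hKH : K ≤ H)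
    (hHK : H ≤ normalizer (K : Set G)) (hH : IsCharP p H) : IsCharP p K := by
  rw [isCharP_iff_inf_centralizer_le] at hH ⊢
  refine le_pCoreIn inf_le_left (isPGroup_of_forall_coprime_orderOf fun u hcop => ?_)
    (hKH.trans (le_normalizer_inf_centralizer_pCoreIn hHK))
  rw [← orderOf_coe] at hcop
  have huH : (u : G) ∈ pCoreIn p H :=
    hH ⟨hKH u.2.1, mem_centralizer_pCoreIn_of_coprime hKH hHK u.2 hcop⟩
  obtain ⟨j, hj⟩ := isPGroup_pCoreIn H ⟨_, huH⟩
  refine Subtype.ext (eq_one_of_pow_eq_one_of_coprime (pow_orderOf_eq_one (u : G)) ?_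
    (hcop.pow_right j))
  simpa using congrArg Subtype.val hj

end PCore

/-- Let `G` be a finite group and `P` a `p`-subgroup of `G`. Then `N_G(P)` is of characteristic
`p` if and only if `C_G(P)` is of characteristic `p`. -/
theorem isCharP_normalizer_iff_centralizer (p : ℕ) [Fact p.Prime]
    (G : Type*) [Group G] [Finite G] (P : Subgroup G) (hP : IsPGroup p P) :
    IsCharP p (Subgroup.normalizer (P : Set G)) ↔ IsCharP p (Subgroup.centralizer (P : Set G)) := by
  have hCN : centralizer (P : Set G) ≤ normalizer (P : Set G) := centralizer_le_normalizer _
  have hNC := le_normalizer_of_normal_subgroupOf hCN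
  refine ⟨IsCharP.of_le_of_le_normalizer hCN hNC, fun hC => ?_⟩
  rw [isCharP_iff_inf_centralizer_le] at hC ⊢
  have hPN : P ≤ pCoreIn p (normalizer (P : Set G)) := le_pCoreIn le_normalizer hP le_rfl
  have hOp := pCoreIn_le_pCoreIn (p := p) hCN hNC
  rintro g ⟨-, hg⟩
  exact hOp (hC ⟨centralizer_le hPN hg, centralizer_le hOp hg⟩)
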